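/- Let N ≥ 1, let M be a real N×N symmetric matrix, and let λ > 0 satisfy λ·‖y‖² ≤ yᵀ M y for every y ∈ ℝ^N. Let α, β, k > 0 and 0 < p < q with k·p < 1 and k·q > 1, and let γ := Γ((1−k·p)/(q−p))·Γ((k·q−1)/(q−p)) / (α^k·Γ(k)·(q−p)) · (α/β)^((1−k·p)/(q−p)). Let T_c > 0, u₀max ≥ 0, ζ_v ≥ 0 and κ₁, …, κ_N, κ_v reals with κᵢ ≥ κ_v for all i, κ_v ≥ N·γ/(λ·T_c), and κ_v·ζ_v ≥ u₀max. Let u₀ : ℝ → ℝ with |u₀(t)| ≤ u₀max for all t. Suppose ṽ : ℝ → ℝ^N is such that for every t ∈ [0, T_c] and every index i, the i-th component of ṽ is differentiable at t with derivative ṽᵢ'(t) = −κᵢ·((α·|eᵢ(t)|^p + β·|eᵢ(t)|^q)^k + ζ_v)·sign(eᵢ(t)) − u₀(t), where e(t) := M ⬝ ṽ(t). Then there exists t* ∈ [0, T_c] with ṽ(t*) = 0. (The velocity observation error of the distributed fixed-time observer must reach the origin no later than the predefined time T_c = T_{c₁}, Theorem 3, velocity part.) -/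

import Mathlib

/-!
Write `e = M ṽ` and `g(x) = (α x^p + β x^q)^k`. Since `M` is symmetric, the Lyapunov function
`W = ṽᵀ M ṽ` has `W' = 2 ṽ'ᵀ e`; the gains `κᵢ ≥ κ_v` and `κ_v ζ_v ≥ u₀max` make the sign
feedback dominate the disturbance, so `W' ≤ -2 κ_v Σ g(|eᵢ|) |eᵢ|`. As `λ W ≤ ‖e‖² ≤ N max |eᵢ|²`,
the quantity `S = √(λ W / N)` is at most `max |eᵢ|`, whence `S' ≤ -(λ κ_v / N) g(S)`. Then
`∫₀^{S(t)} 1/g + (λ κ_v / N) t` is non-increasing, so `S` vanishes by the time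
`N (∫₀^∞ 1/g) / (λ κ_v) ≤ T_c`; the substitution `s = ((α/β) u)^(1/(q-p))` turns `∫₀^∞ 1/g`
into a beta integral, whose value is `γ`.
-/

open Matrix Real MeasureTheory Set

theorem integral_rpow_mul_one_sub_rpow {a b : ℝ} (ha : 0 < a) (hb : 0 < b) :
    ∫ x in (0 : ℝ)..1, x ^ (a - 1) * (1 - x) ^ (b - 1) = Gamma a * Gamma b / Gamma (a + b) := by
  have hC := Complex.Gamma_mul_Gamma_eq_betaIntegral (s := a) (t := b)
    (by simpa using ha) (by simpa using hb)
  have hbeta : Complex.betaIntegral a b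
      = ((∫ x in (0 : ℝ)..1, x ^ (a - 1) * (1 - x) ^ (b - 1) : ℝ) : ℂ) := by
    rw [Complex.betaIntegral, ← intervalIntegral.integral_ofReal]
    refine intervalIntegral.integral_congr fun x hx => ?_
    rw [uIcc_of_le zero_le_one] at hx
    push_cast
    rw [Complex.ofReal_cpow hx.1, Complex.ofReal_cpow (sub_nonneg.2 hx.2)]
    push_cast
    ring
  rw [hbeta, ← Complex.ofReal_add, Complex.Gamma_ofReal, Complex.Gamma_ofReal,
    Complex.Gamma_ofReal] at hC
  rw [eq_div_iff (Gamma_pos_of_pos (add_pos ha hb)).ne', mul_comm]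
  exact_mod_cast hC.symm

theorem integral_Ioi_eq_integral_Ioo_div_one_sub (g : ℝ → ℝ) :
    ∫ u in Ioi (0 : ℝ), g u = ∫ x in Ioo (0 : ℝ) 1, ((1 - x) ^ 2)⁻¹ * g (x / (1 - x)) := by
  have hderiv : ∀ x ∈ Ioo (0 : ℝ) 1,
      HasDerivWithinAt (fun x => x / (1 - x)) ((1 - x) ^ 2)⁻¹ (Ioo 0 1) x := by
    intro x hx
    have h1x : 1 - x ≠ 0 := (sub_pos.2 hx.2).ne'
    refine (((hasDerivAt_id x).div ((hasDerivAt_const x 1).sub (hasDerivAt_id x)) h1x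
      ).congr_deriv ?_).hasDerivWithinAt
    simp
  have hmono : StrictMonoOn (fun x : ℝ => x / (1 - x)) (Ioo 0 1) := by
    intro x hx y hy hxy
    rw [div_lt_div_iff₀ (sub_pos.2 hx.2) (sub_pos.2 hy.2)]
    nlinarith
  have himage : (fun x : ℝ => x / (1 - x)) '' Ioo 0 1 = Ioi 0 := by
    ext u
    constructor
    · rintro ⟨x, hx, rfl⟩
      exact div_pos hx.1 (sub_pos.2 hx.2)
    · intro (hu : 0 < u)
      refine ⟨u / (1 + u), ⟨by positivity, (div_lt_one (by positivity)).2 (by linarith)⟩, ?_⟩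
      field_simp
      ring
  rw [← himage, integral_image_eq_integral_abs_deriv_smul measurableSet_Ioo hderiv hmono.injOn]
  refine setIntegral_congr_fun measurableSet_Ioo fun x _ => ?_
  rw [abs_of_nonneg (by positivity), smul_eq_mul]

theorem integral_Ioi_rpow_mul_one_add_rpow {a b : ℝ} (ha : 0 < a) (hb : 0 < b) :
    ∫ u in Ioi (0 : ℝ), u ^ (a - 1) * (1 + u) ^ (-(a + b))
      = Gamma a * Gamma b / Gamma (a + b) := by
  rw [integral_Ioi_eq_integral_Ioo_div_one_sub, ← integral_rpow_mul_one_sub_rpow ha hb,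
    intervalIntegral.integral_of_le zero_le_one, integral_Ioc_eq_integral_Ioo]
  refine setIntegral_congr_fun measurableSet_Ioo fun x hx => ?_
  have hx0 : 0 < x := hx.1
  have h1x : 0 < 1 - x := sub_pos.2 hx.2
  have hsum : 1 + x / (1 - x) = (1 - x)⁻¹ := by field_simp; ring
  rw [hsum, div_rpow hx0.le h1x.le, inv_rpow h1x.le, ← rpow_neg h1x.le, neg_neg,
    ← rpow_natCast, ← rpow_neg h1x.le, div_eq_mul_inv, ← rpow_neg h1x.le]
  calc (1 - x) ^ (-((2 : ℕ) : ℝ)) * (x ^ (a - 1) * (1 - x) ^ (-(a - 1)) * (1 - x) ^ (a + b))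
      = x ^ (a - 1) * ((1 - x) ^ (-((2 : ℕ) : ℝ)) * (1 - x) ^ (-(a - 1)) * (1 - x) ^ (a + b)) := by
        ring
    _ = x ^ (a - 1) * (1 - x) ^ (b - 1) := by
        rw [← rpow_add h1x, ← rpow_add h1x]
        congr 2
        push_cast
        ring

theorem rpow_add_rpow_comp_rpow_inv_sub (α β : ℝ) {p q y : ℝ} (hpq : p < q) (hy : 0 < y) :
    α * (y ^ (q - p)⁻¹) ^ p + β * (y ^ (q - p)⁻¹) ^ q = y ^ (p / (q - p)) * (α + β * y) := by
  have hexp : (q - p)⁻¹ * q = p / (q - p) + 1 := by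
    field_simp [(sub_pos.2 hpq).ne']
    ring
  rw [← rpow_mul hy.le, ← rpow_mul hy.le, hexp, rpow_add hy, rpow_one, ← div_eq_inv_mul]
  ring

theorem integral_Ioi_inv_rpow_add_rpow {α β k p q : ℝ} (hα : 0 < α) (hβ : 0 < β) (hk : 0 < k)
    (hpq : p < q) (hkp : k * p < 1) (hkq : 1 < k * q) :
    ∫ s in Ioi (0 : ℝ), ((α * s ^ p + β * s ^ q) ^ k)⁻¹
      = Gamma ((1 - k * p) / (q - p)) * Gamma ((k * q - 1) / (q - p)) /
        (α ^ k * Gamma k * (q - p)) * (α / β) ^ ((1 - k * p) / (q - p)) := by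
  have hr : 0 < q - p := sub_pos.2 hpq
  set a := (1 - k * p) / (q - p) with ha_def
  set b := (k * q - 1) / (q - p)
  have ha : 0 < a := div_pos (by linarith) hr
  have hb : 0 < b := div_pos (by linarith) hr
  have hab : a + b = k := by
    rw [← add_div, div_eq_iff hr.ne']
    ring
  set c := α / β
  have hc : 0 < c := div_pos hα hβ
  -- substituting `s = (c * u) ^ (q - p)⁻¹` turns the integrand into a beta integrand
  have hpoint : ∀ u ∈ Ioi (0 : ℝ),
      ((q - p)⁻¹ * (c * u) ^ ((q - p)⁻¹ - 1)) •
        ((α * ((c * u) ^ (q - p)⁻¹) ^ p + β * ((c * u) ^ (q - p)⁻¹) ^ q) ^ k)⁻¹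
      = ((q - p)⁻¹ * (α ^ k)⁻¹ * c ^ (a - 1)) * (u ^ (a - 1) * (1 + u) ^ (-(a + b))) := by
    intro u (hu : 0 < u)
    have hy : 0 < c * u := mul_pos hc hu
    have hβy : α + β * (c * u) = α * (1 + u) := by
      simp only [c]
      field_simp
    have hexp : (q - p)⁻¹ - 1 + -(p / (q - p) * k) = a - 1 := by
      rw [ha_def]
      field_simp
      ring
    rw [rpow_add_rpow_comp_rpow_inv_sub α β hpq hy, hβy, smul_eq_mul,
      mul_rpow (rpow_nonneg hy.le _) (by positivity), mul_rpow hα.le (by positivity),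
      ← rpow_mul hy.le, hab, rpow_neg (by positivity : (0 : ℝ) ≤ 1 + u)]
    calc (q - p)⁻¹ * (c * u) ^ ((q - p)⁻¹ - 1) *
          ((c * u) ^ (p / (q - p) * k) * (α ^ k * (1 + u) ^ k))⁻¹
        = (q - p)⁻¹ * (α ^ k)⁻¹ * ((c * u) ^ ((q - p)⁻¹ - 1) *
            (c * u) ^ (-(p / (q - p) * k))) * ((1 + u) ^ k)⁻¹ := by
          rw [rpow_neg hy.le]
          ring
      _ = _ := by rw [← rpow_add hy, hexp, mul_rpow hc.le hu.le]; ring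
  have hscale := integral_comp_mul_left_Ioi' (fun y => ((q - p)⁻¹ * y ^ ((q - p)⁻¹ - 1)) •
    ((α * (y ^ (q - p)⁻¹) ^ p + β * (y ^ (q - p)⁻¹) ^ q) ^ k)⁻¹) 0 hc
  rw [mul_zero] at hscale
  rw [← integral_comp_rpow_Ioi_of_pos (inv_pos.2 hr), ← hscale,
    setIntegral_congr_fun measurableSet_Ioi hpoint, MeasureTheory.integral_const_mul,
    integral_Ioi_rpow_mul_one_add_rpow ha hb, hab, smul_eq_mul,
    show c ^ a = c ^ (a - 1) * c by rw [← rpow_add_one hc.ne', sub_add_cancel]]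
  have := Gamma_pos_of_pos hk
  field_simp

theorem integrableOn_Ioi_inv_rpow_add_rpow {α β k p q : ℝ} (hα : 0 < α) (hβ : 0 < β)
    (hk : 0 < k) (hpq : p < q) (hkp : k * p < 1) (hkq : 1 < k * q) :
    IntegrableOn (fun s => ((α * s ^ p + β * s ^ q) ^ k)⁻¹) (Ioi 0) := by
  have hr : 0 < q - p := sub_pos.2 hpq
  have hpos : 0 < Gamma ((1 - k * p) / (q - p)) * Gamma ((k * q - 1) / (q - p)) /
      (α ^ k * Gamma k * (q - p)) * (α / β) ^ ((1 - k * p) / (q - p)) := by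
    have := Gamma_pos_of_pos (div_pos (sub_pos.2 hkp) hr)
    have := Gamma_pos_of_pos (div_pos (sub_pos.2 hkq) hr)
    have := Gamma_pos_of_pos hk
    positivity
  by_contra h
  rw [← integral_Ioi_inv_rpow_add_rpow hα hβ hk hpq hkp hkq, integral_undef h] at hpos
  exact lt_irrefl 0 hpos

theorem rpow_add_rpow_pos {α β x : ℝ} (hα : 0 < α) (hβ : 0 < β) (hx : 0 < x) (p q : ℝ) :
    0 < α * x ^ p + β * x ^ q := by
  have := rpow_pos_of_pos hx p
  have := rpow_pos_of_pos hx q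
  positivity

theorem continuousOn_rpow_rpow_add_rpow {α β k p q : ℝ} (hα : 0 < α) (hβ : 0 < β) :
    ContinuousOn (fun x => (α * x ^ p + β * x ^ q) ^ k) (Ioi 0) := by
  intro x (hx : 0 < x)
  have hpow (r : ℝ) : ContinuousAt (fun x : ℝ => x ^ r) x :=
    continuousAt_id.rpow_const (Or.inl hx.ne')
  exact (((continuousAt_const.mul (hpow p)).add (continuousAt_const.mul (hpow q))).rpow_const
    (Or.inl (rpow_add_rpow_pos hα hβ hx p q).ne')).continuousWithinAt

theorem monotoneOn_rpow_rpow_add_rpow {α β k p q : ℝ} (hα : 0 ≤ α) (hβ : 0 ≤ β) (hk : 0 ≤ k)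
    (hp : 0 ≤ p) (hq : 0 ≤ q) :
    MonotoneOn (fun x => (α * x ^ p + β * x ^ q) ^ k) (Ici 0) := by
  intro x (hx : 0 ≤ x) y (hy : 0 ≤ y) hxy
  have := rpow_le_rpow hx hxy hp
  have := rpow_le_rpow hx hxy hq
  exact rpow_le_rpow (by positivity) (by gcongr) hk

section SettlingTime

variable {g : ℝ → ℝ}

theorem hasDerivAt_integral_inv (hg : ContinuousOn g (Ioi 0)) (hg_pos : ∀ x, 0 < x → 0 < g x)
    (hint : IntegrableOn (fun x => (g x)⁻¹) (Ioi 0)) {x : ℝ} (hx : 0 < x) :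
    HasDerivAt (fun y => ∫ s in (0 : ℝ)..y, (g s)⁻¹) (g x)⁻¹ x := by
  have hinv : ContinuousOn (fun x => (g x)⁻¹) (Ioi 0) :=
    hg.inv₀ fun x hx => (hg_pos x hx).ne'
  exact intervalIntegral.integral_hasDerivAt_right
    ((intervalIntegrable_iff_integrableOn_Ioc_of_le hx.le).2 (hint.mono_set Ioc_subset_Ioi_self))
    (hinv.stronglyMeasurableAtFilter isOpen_Ioi x hx) (hinv.continuousAt (Ioi_mem_nhds hx))

theorem exists_nonpos_of_hasDerivAt_le_neg_mul (hg : ContinuousOn g (Ioi 0))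
    (hg_pos : ∀ x, 0 < x → 0 < g x) (hint : IntegrableOn (fun x => (g x)⁻¹) (Ioi 0))
    {S : ℝ → ℝ} {c T : ℝ} (hT : 0 ≤ T) (hcT : ∫ x in Ioi 0, (g x)⁻¹ ≤ c * T)
    (hS : ∀ t ∈ Icc 0 T, 0 < S t → ∃ d, HasDerivAt S d t ∧ d ≤ -(c * g (S t))) :
    ∃ t ∈ Icc 0 T, S t ≤ 0 := by
  by_contra! hS_pos
  have hφ_le (x : ℝ) (hx : 0 ≤ x) : ∫ s in (0 : ℝ)..x, (g s)⁻¹ ≤ ∫ s in Ioi 0, (g s)⁻¹ := by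
    rw [intervalIntegral.integral_of_le hx]
    refine setIntegral_mono_set hint ?_ Ioc_subset_Ioi_self.eventuallyLE
    exact (ae_restrict_iff' measurableSet_Ioi).2
      (ae_of_all _ fun s hs => (inv_pos.2 (hg_pos s hs)).le)
  have hφ_pos (x : ℝ) (hx : 0 < x) : 0 < ∫ s in (0 : ℝ)..x, (g s)⁻¹ :=
    intervalIntegral.intervalIntegral_pos_of_pos_on
      ((intervalIntegrable_iff_integrableOn_Ioc_of_le hx.le).2 (hint.mono_set Ioc_subset_Ioi_self))
      (fun s hs => inv_pos.2 (hg_pos s hs.1)) hx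
  choose! d hd hd_le using fun t ht => hS t ht (hS_pos t ht)
  set F : ℝ → ℝ := fun t => (∫ s in (0 : ℝ)..S t, (g s)⁻¹) + c * t
  have hF (t : ℝ) (ht : t ∈ Icc 0 T) : HasDerivAt F ((g (S t))⁻¹ * d t + c) t :=
    ((hasDerivAt_integral_inv hg hg_pos hint (hS_pos t ht)).comp t (hd t ht)).add
      (((hasDerivAt_id t).const_mul c).congr_deriv (mul_one c))
  have hF_anti : AntitoneOn F (Icc 0 T) := by
    refine antitoneOn_of_hasDerivWithinAt_nonpos (convex_Icc 0 T)
      (fun t ht => (hF t ht).continuousAt.continuousWithinAt)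
      (fun t ht => (hF t (interior_subset ht)).hasDerivWithinAt) fun t ht => ?_
    have ht' := interior_subset ht
    have hgS := hg_pos _ (hS_pos t ht')
    calc (g (S t))⁻¹ * d t + c ≤ (g (S t))⁻¹ * -(c * g (S t)) + c := by
          gcongr
          exact hd_le t ht'
      _ = 0 := by field_simp; ring
  have h0 : (0 : ℝ) ∈ Icc 0 T := ⟨le_rfl, hT⟩
  have hT' : T ∈ Icc 0 T := ⟨hT, le_rfl⟩
  have hFT : F T ≤ F 0 := hF_anti h0 hT' hT
  simp only [F, mul_zero, add_zero] at hFT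
  linarith [hφ_le (S 0) (hS_pos 0 h0).le, hφ_pos (S T) (hS_pos T hT')]

end SettlingTime

theorem sign_mul_self_eq_abs (e : ℝ) : sign e * e = |e| := by
  rcases lt_trichotomy e 0 with h | rfl | h
  · rw [sign_of_neg h, abs_of_neg h, neg_one_mul]
  · simp
  · rw [sign_of_pos h, abs_of_pos h, one_mul]

theorem sign_feedback_mul_le {κ κ₀ G ζ u : ℝ} (hκ : κ₀ ≤ κ) (hG : 0 ≤ G) (hζ : 0 ≤ ζ)
    (hu : |u| ≤ κ₀ * ζ) (e : ℝ) :
    (-κ * (G + ζ) * sign e - u) * e ≤ -(κ₀ * (G * |e|)) := by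
  have hκ_term : κ₀ * ((G + ζ) * |e|) ≤ κ * ((G + ζ) * |e|) := by gcongr
  have hu_term : -(u * e) ≤ κ₀ * ζ * |e| :=
    calc -(u * e) ≤ |u| * |e| := by rw [← abs_mul]; exact neg_le_abs _
      _ ≤ κ₀ * ζ * |e| := by gcongr
  calc (-κ * (G + ζ) * sign e - u) * e = -(κ * ((G + ζ) * (sign e * e))) - u * e := by ring
    _ ≤ -(κ₀ * (G * |e|)) := by rw [sign_mul_self_eq_abs]; linarith

section Observer

variable {ι : Type*} [Fintype ι] {M : Matrix ι ι ℝ} {lam : ℝ}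

theorem hasDerivAt_dotProduct_mulVec_self (hM : M.IsSymm) {v : ℝ → ι → ℝ} {v' : ι → ℝ} {t : ℝ}
    (hv : ∀ i, HasDerivAt (fun s => v s i) (v' i) t) :
    HasDerivAt (fun s => v s ⬝ᵥ M *ᵥ v s) (2 * (v' ⬝ᵥ M *ᵥ v t)) t := by
  have hMv (i : ι) : HasDerivAt (fun s => (M *ᵥ v s) i) ((M *ᵥ v') i) t :=
    HasDerivAt.fun_sum fun j _ => (hv j).const_mul (M i j)
  have hswap : v t ⬝ᵥ M *ᵥ v' = v' ⬝ᵥ M *ᵥ v t := by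
    rw [dotProduct_mulVec, ← mulVec_transpose, hM.eq, dotProduct_comm]
  refine (HasDerivAt.fun_sum (u := Finset.univ) fun i _ => (hv i).mul (hMv i)).congr_deriv ?_
  rw [Finset.sum_add_distrib]
  change v' ⬝ᵥ M *ᵥ v t + v t ⬝ᵥ M *ᵥ v' = _
  rw [hswap, two_mul]

theorem mul_dotProduct_mulVec_le (hlam : 0 ≤ lam)
    (hquad : ∀ y, lam * (y ⬝ᵥ y) ≤ y ⬝ᵥ M *ᵥ y) (v : ι → ℝ) :
    lam * (v ⬝ᵥ M *ᵥ v) ≤ M *ᵥ v ⬝ᵥ M *ᵥ v := by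
  have hcs : (v ⬝ᵥ M *ᵥ v) ^ 2 ≤ (v ⬝ᵥ v) * (M *ᵥ v ⬝ᵥ M *ᵥ v) := by
    simpa only [dotProduct, sq] using
      Finset.sum_mul_sq_le_sq_mul_sq Finset.univ v (M *ᵥ v)
  have hv := hquad v
  have hee : 0 ≤ M *ᵥ v ⬝ᵥ M *ᵥ v := Finset.sum_nonneg fun i _ => mul_self_nonneg _
  rcases le_or_gt (v ⬝ᵥ M *ᵥ v) 0 with hW | hW
  · nlinarith
  · -- `lam * W² ≤ lam * ‖v‖² * ‖M v‖² ≤ W * ‖M v‖²`, then divide by `W`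
    nlinarith

theorem exists_dotProduct_self_le_card_mul_sq [Nonempty ι] (e : ι → ℝ) :
    ∃ i, e ⬝ᵥ e ≤ Fintype.card ι * e i ^ 2 := by
  obtain ⟨i, -, hi⟩ := Finset.exists_max_image Finset.univ (fun i => e i ^ 2) Finset.univ_nonempty
  refine ⟨i, ?_⟩
  calc e ⬝ᵥ e = ∑ j, e j ^ 2 := by simp only [dotProduct, sq]
    _ ≤ ∑ _j : ι, e i ^ 2 := Finset.sum_le_sum hi
    _ = Fintype.card ι * e i ^ 2 := by simp

theorem exists_sqrt_le_abs_mulVec [Nonempty ι] (hlam : 0 ≤ lam)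
    (hquad : ∀ y, lam * (y ⬝ᵥ y) ≤ y ⬝ᵥ M *ᵥ y) (v : ι → ℝ) :
    ∃ i, √(lam / Fintype.card ι * (v ⬝ᵥ M *ᵥ v)) ≤ |(M *ᵥ v) i| := by
  obtain ⟨i, hi⟩ := exists_dotProduct_self_le_card_mul_sq (M *ᵥ v)
  refine ⟨i, sqrt_le_iff.2 ⟨abs_nonneg _, ?_⟩⟩
  have hcard : (0 : ℝ) < Fintype.card ι := by exact_mod_cast Fintype.card_pos
  rw [sq_abs, div_mul_eq_mul_div, div_le_iff₀ hcard]
  linarith [mul_dotProduct_mulVec_le hlam hquad v]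

theorem feedback_dotProduct_mulVec_le [Nonempty ι] {G : ℝ → ℝ} (hG_mono : MonotoneOn G (Ici 0))
    (hG_nonneg : ∀ x, 0 ≤ x → 0 ≤ G x) (hlam : 0 ≤ lam)
    (hquad : ∀ y, lam * (y ⬝ᵥ y) ≤ y ⬝ᵥ M *ᵥ y) {κs : ι → ℝ} {κ₀ ζ u : ℝ} (hκ₀ : 0 ≤ κ₀)
    (hκs : ∀ i, κ₀ ≤ κs i) (hζ : 0 ≤ ζ) (hu : |u| ≤ κ₀ * ζ) (v : ι → ℝ) :
    (fun i => -(κs i) * (G |(M *ᵥ v) i| + ζ) * sign ((M *ᵥ v) i) - u) ⬝ᵥ M *ᵥ v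
      ≤ -(κ₀ * (G √(lam / Fintype.card ι * (v ⬝ᵥ M *ᵥ v)) *
          √(lam / Fintype.card ι * (v ⬝ᵥ M *ᵥ v)))) := by
  obtain ⟨i, hi⟩ := exists_sqrt_le_abs_mulVec hlam hquad v
  set e := M *ᵥ v
  set S := √(lam / Fintype.card ι * (v ⬝ᵥ M *ᵥ v))
  have hGS : G S * S ≤ G |e i| * |e i| :=
    mul_le_mul (hG_mono (mem_Ici.2 (sqrt_nonneg _)) (mem_Ici.2 (abs_nonneg _)) hi) hi
      (sqrt_nonneg _) (hG_nonneg _ (abs_nonneg _))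
  have hterms_nonneg (j : ι) : 0 ≤ G |e j| * |e j| :=
    mul_nonneg (hG_nonneg _ (abs_nonneg _)) (abs_nonneg _)
  calc (fun i => -(κs i) * (G |e i| + ζ) * sign (e i) - u) ⬝ᵥ e
      ≤ ∑ j, -(κ₀ * (G |e j| * |e j|)) :=
        Finset.sum_le_sum fun j _ =>
          sign_feedback_mul_le (hκs j) (hG_nonneg _ (abs_nonneg _)) hζ hu (e j)
    _ = -(κ₀ * ∑ j, G |e j| * |e j|) := by rw [Finset.sum_neg_distrib, Finset.mul_sum]
    _ ≤ -(κ₀ * (G |e i| * |e i|)) := by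
        gcongr
        exact Finset.single_le_sum (fun j _ => hterms_nonneg j) (Finset.mem_univ i)
    _ ≤ -(κ₀ * (G S * S)) := by gcongr

theorem exists_hasDerivAt_sqrt_le {W : ℝ → ℝ} {A c b t : ℝ} (hW : HasDerivAt W (2 * A) t)
    (hc : 0 ≤ c) (hpos : 0 < √(c * W t)) (hA : A ≤ -(b * √(c * W t))) :
    ∃ d, HasDerivAt (fun s => √(c * W s)) d t ∧ d ≤ -(c * b) := by
  refine ⟨_, (hW.const_mul c).sqrt (sqrt_pos.1 hpos).ne', ?_⟩
  rw [div_le_iff₀ (by positivity)]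
  nlinarith [mul_le_mul_of_nonneg_left hA hc]

theorem exists_hasDerivAt_sqrt_dotProduct_mulVec_le [Nonempty ι] (hM : M.IsSymm) {G : ℝ → ℝ}
    (hG_mono : MonotoneOn G (Ici 0)) (hG_nonneg : ∀ x, 0 ≤ x → 0 ≤ G x) (hlam : 0 ≤ lam)
    (hquad : ∀ y, lam * (y ⬝ᵥ y) ≤ y ⬝ᵥ M *ᵥ y) {κs : ι → ℝ} {κ₀ ζ u t : ℝ} (hκ₀ : 0 ≤ κ₀)
    (hκs : ∀ i, κ₀ ≤ κs i) (hζ : 0 ≤ ζ) (hu : |u| ≤ κ₀ * ζ) {v : ℝ → ι → ℝ}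
    (hv : ∀ i, HasDerivAt (fun s => v s i)
      (-(κs i) * (G |(M *ᵥ v t) i| + ζ) * sign ((M *ᵥ v t) i) - u) t)
    (hpos : 0 < √(lam / Fintype.card ι * (v t ⬝ᵥ M *ᵥ v t))) :
    ∃ d, HasDerivAt (fun s => √(lam / Fintype.card ι * (v s ⬝ᵥ M *ᵥ v s))) d t ∧
      d ≤ -(lam / Fintype.card ι * κ₀ * G √(lam / Fintype.card ι * (v t ⬝ᵥ M *ᵥ v t))) := by
  have hdecay := feedback_dotProduct_mulVec_le hG_mono hG_nonneg hlam hquad hκ₀ hκs hζ hu (v t)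
  obtain ⟨d, hd, hd_le⟩ := exists_hasDerivAt_sqrt_le (hasDerivAt_dotProduct_mulVec_self hM hv)
    (b := κ₀ * G √(lam / Fintype.card ι * (v t ⬝ᵥ M *ᵥ v t))) (by positivity) hpos
    (hdecay.trans_eq (by ring))
  exact ⟨d, hd, hd_le.trans_eq (by ring)⟩

theorem eq_zero_of_dotProduct_mulVec_nonpos (hlam : 0 < lam)
    (hquad : ∀ y, lam * (y ⬝ᵥ y) ≤ y ⬝ᵥ M *ᵥ y) {v : ι → ℝ} (hv : v ⬝ᵥ M *ᵥ v ≤ 0) : v = 0 := by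
  have hvv : v ⬝ᵥ v ≤ 0 := nonpos_of_mul_nonpos_right ((hquad v).trans hv) hlam
  exact dotProduct_self_eq_zero.1
    (le_antisymm hvv (Finset.sum_nonneg fun i _ => mul_self_nonneg (v i)))

end Observer

theorem observer_velocity_reaches_origin_general
    (N : ℕ) (hN : 1 ≤ N) (M : Matrix (Fin N) (Fin N) ℝ) (hsymm : M.IsSymm)
    (lam : ℝ) (hlam : 0 < lam)
    (hquad : ∀ y : Fin N → ℝ, lam * (y ⬝ᵥ y) ≤ y ⬝ᵥ M.mulVec y)
    (α β k p q : ℝ) (hα : 0 < α) (hβ : 0 < β) (hk : 0 < k)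
    (hp : 0 < p) (hpq : p < q) (hkp : k * p < 1) (hkq : 1 < k * q)
    (γ : ℝ)
    (hγ : γ = Real.Gamma ((1 - k * p) / (q - p)) * Real.Gamma ((k * q - 1) / (q - p)) /
        (α ^ k * Real.Gamma k * (q - p)) * (α / β) ^ ((1 - k * p) / (q - p)))
    (Tc : ℝ) (hTc : 0 < Tc)
    (u₀max : ℝ) (ζv : ℝ) (hζv : 0 ≤ ζv)
    (κs : Fin N → ℝ) (κv : ℝ) (hκs : ∀ i, κv ≤ κs i)
    (hκv : (N : ℝ) * γ / (lam * Tc) ≤ κv)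
    (hκζ : u₀max ≤ κv * ζv)
    (u₀ : ℝ → ℝ) (hu₀ : ∀ t, |u₀ t| ≤ u₀max)
    (v : ℝ → Fin N → ℝ)
    (hderiv : ∀ t ∈ Set.Icc (0 : ℝ) Tc, ∀ i : Fin N,
      HasDerivAt (fun s => v s i)
        (-(κs i) * ((α * |M.mulVec (v t) i| ^ p + β * |M.mulVec (v t) i| ^ q) ^ k + ζv) *
            Real.sign (M.mulVec (v t) i) - u₀ t) t) :
    ∃ tstar ∈ Set.Icc (0 : ℝ) Tc, v tstar = 0 := by
  have : Nonempty (Fin N) := ⟨⟨0, hN⟩⟩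
  have hN_pos : (0 : ℝ) < N := by exact_mod_cast hN
  set G : ℝ → ℝ := fun x => (α * x ^ p + β * x ^ q) ^ k
  have hG_pos (x : ℝ) (hx : 0 < x) : 0 < G x := rpow_pos_of_pos (rpow_add_rpow_pos hα hβ hx p q) k
  have hG_int : ∫ x in Ioi 0, (G x)⁻¹ = γ :=
    (integral_Ioi_inv_rpow_add_rpow hα hβ hk hpq hkp hkq).trans hγ.symm
  have hγ_nonneg : 0 ≤ γ :=
    hG_int ▸ setIntegral_nonneg measurableSet_Ioi fun x hx => (inv_pos.2 (hG_pos x hx)).le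
  have hκv_nonneg : 0 ≤ κv := le_trans (by positivity) hκv
  have hγ_le : γ ≤ lam / N * κv * Tc := by
    rw [div_le_iff₀ (by positivity)] at hκv
    rw [div_mul_eq_mul_div, div_mul_eq_mul_div, le_div_iff₀ hN_pos]
    linarith
  have hS_decay (t : ℝ) (ht : t ∈ Icc 0 Tc) := exists_hasDerivAt_sqrt_dotProduct_mulVec_le
    hsymm (monotoneOn_rpow_rpow_add_rpow hα.le hβ.le hk.le hp.le (hp.trans hpq).le)
    (fun x hx => rpow_nonneg (by positivity) k) hlam.le hquad hκv_nonneg hκs hζv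
    ((hu₀ t).trans hκζ) (hderiv t ht)
  simp only [Fintype.card_fin] at hS_decay
  obtain ⟨t, ht, hvt⟩ := exists_nonpos_of_hasDerivAt_le_neg_mul
    (continuousOn_rpow_rpow_add_rpow hα hβ) hG_pos
    (integrableOn_Ioi_inv_rpow_add_rpow hα hβ hk hpq hkp hkq) hTc.le (hG_int.trans_le hγ_le)
    hS_decay
  refine ⟨t, ht, eq_zero_of_dotProduct_mulVec_nonpos hlam hquad ?_⟩
  exact nonpos_of_mul_nonpos_right (sqrt_eq_zero'.1 (le_antisymm hvt (sqrt_nonneg _)))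
    (by positivity)

/-- Theorem 3, velocity part: under the parameter conditions of Theorem 3, the
velocity observation error of the distributed fixed-time observer reaches the
origin no later than the predefined time `T_c`. -/
theorem observer_velocity_reaches_origin
    (N : ℕ) (hN : 1 ≤ N) (M : Matrix (Fin N) (Fin N) ℝ) (hsymm : M.IsSymm)
    (lam : ℝ) (hlam : 0 < lam)
    (hquad : ∀ y : Fin N → ℝ, lam * (y ⬝ᵥ y) ≤ y ⬝ᵥ M.mulVec y)
    (α β k p q : ℝ) (hα : 0 < α) (hβ : 0 < β) (hk : 0 < k)
    (hp : 0 < p) (hpq : p < q) (hkp : k * p < 1) (hkq : 1 < k * q)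
    (γ : ℝ)
    (hγ : γ = Real.Gamma ((1 - k * p) / (q - p)) * Real.Gamma ((k * q - 1) / (q - p)) /
        (α ^ k * Real.Gamma k * (q - p)) * (α / β) ^ ((1 - k * p) / (q - p)))
    (Tc : ℝ) (hTc : 0 < Tc)
    (u₀max : ℝ) (hu₀max : 0 ≤ u₀max) (ζv : ℝ) (hζv : 0 ≤ ζv)
    (κs : Fin N → ℝ) (κv : ℝ) (hκs : ∀ i, κv ≤ κs i)
    (hκv : (N : ℝ) * γ / (lam * Tc) ≤ κv)
    (hκζ : u₀max ≤ κv * ζv)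
    (u₀ : ℝ → ℝ) (hu₀ : ∀ t, |u₀ t| ≤ u₀max)
    (v : ℝ → Fin N → ℝ)
    (hderiv : ∀ t ∈ Set.Icc (0 : ℝ) Tc, ∀ i : Fin N,
      HasDerivAt (fun s => v s i)
        (-(κs i) * ((α * |M.mulVec (v t) i| ^ p + β * |M.mulVec (v t) i| ^ q) ^ k + ζv) *
            Real.sign (M.mulVec (v t) i) - u₀ t) t) :
    ∃ tstar ∈ Set.Icc (0 : ℝ) Tc, v tstar = 0 :=
  observer_velocity_reaches_origin_general N hN M hsymm lam hlam hquad α β k p q hα hβ hk hp hpq hkp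
    hkq γ hγ Tc hTc u₀max ζv hζv κs κv hκs hκv hκζ u₀ hu₀ v hderiv
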